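/- arXiv:2405.02669 — 3 statements merged into one kernel-verified Lean document; each statement's English description precedes it below -/
import Mathlib

section
/- Let Ω ⊆ ℝ^n be a nonempty open set, let p₂ > p₁ - 1 > 0 be real numbers and set p = p₂/(p₂ - p₁ + 1). Let f : ℝ^n → ℝ be a C¹ function and let C, D > 0 be real numbers such that for every nonnegative smooth function φ : ℝ^n → ℝ with compact support contained in Ω one has -∫_Ω ‖∇f‖^{p₁-2} ⟨∇f, ∇φ⟩ dx - C ∫_Ω φ ‖∇f‖^{p₂} dx ≥ D ∫_Ω φ dx. Then for every smooth function v : ℝ^n → ℝ with compact support contained in Ω one has (C/(p-1))^{p-1} · D · ∫_Ω |v|^p dx ≤ ∫_Ω ‖∇v‖^p dx. -/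
/-!
Test the weak inequality against `φ_ε = (v² + ε²)^{p/2} - ε^p`, a smooth regularization of
`|v|^p`. Its gradient is `c ∇v` with `|c| ≤ p (v² + ε²)^{(p-1)/2}`, so Young's inequality with
the conjugate exponents `p / (p - 1) = p₂ / (p₁ - 1)` and `p` bounds the flux
`-|∇f|^{p₁-2} ⟨∇f, ∇φ_ε⟩` pointwise by `C (φ_ε + ε^p) |∇f|^{p₂} + ((p - 1) / C)^{p-1} |∇v|^p`.
The part `C φ_ε |∇f|^{p₂}` cancels against the absorption term of the hypothesis, and
`|v|^p ≤ φ_ε + ε^p`, whence `D ∫ |v|^p ≤ ((p - 1) / C)^{p-1} ∫ |∇v|^p + O(ε^p)`; let `ε → 0`.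
-/

open MeasureTheory Real RealInnerProductSpace Set Filter Topology

lemma le_of_forall_pos_le_add_rpow_mul {a b c p : ℝ} (hp : 0 < p)
    (h : ∀ ε : ℝ, 0 < ε → a ≤ b + ε ^ p * c) : a ≤ b := by
  have hlim : Tendsto (fun ε : ℝ => b + ε ^ p * c) (𝓝[>] 0) (𝓝 b) := by
    have hpow := ((continuous_rpow_const hp.le).tendsto 0).mono_left
      (nhdsWithin_le_nhds (s := Ioi 0))
    simpa [zero_rpow hp.ne'] using (hpow.mul_const c).const_add b
  exact ge_of_tendsto hlim (eventually_nhdsWithin_of_forall h)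

lemma sq_rpow_div_two {x : ℝ} (hx : 0 ≤ x) (r : ℝ) : (x ^ 2) ^ (r / 2) = x ^ r := by
  rw [← rpow_natCast_mul hx]
  congr 1
  push_cast
  ring

lemma young_inequality_weighted {p C a b : ℝ} (hp : 1 < p) (hC : 0 < C) (ha : 0 ≤ a)
    (hb : 0 ≤ b) :
    p * a * b ≤ C * a ^ (p / (p - 1)) + ((p - 1) / C) ^ (p - 1) * b ^ p := by
  set q := p / (p - 1) with hq
  have hp0 : 0 < p := one_pos.trans hp
  have hp1 : 0 < p - 1 := sub_pos.2 hp
  have hq0 : 0 < q := div_pos hp0 hp1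
  have hpq : q.HolderConjugate p := by
    rw [holderConjugate_iff]
    exact ⟨by rw [hq, lt_div_iff₀ hp1]; linarith, by rw [hq]; field_simp; ring⟩
  have hCq : 0 < C * q := mul_pos hC hq0
  set t := (C * q) ^ q⁻¹
  have ht : 0 < t := rpow_pos_of_pos hCq _
  have htq : t ^ q = C * q := by rw [← rpow_mul hCq.le, inv_mul_cancel₀ hq0.ne', rpow_one]
  have htp : t ^ p = (C * q) ^ (p - 1) := by
    rw [← rpow_mul hCq.le]; congr 1; rw [hq]; field_simp
  have young := young_inequality_of_nonneg (mul_nonneg ht.le ha)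
    (div_nonneg (mul_nonneg hp0.le hb) ht.le) hpq
  have h1 : t * a * (p * b / t) = p * a * b := by field_simp
  have h2 : (t * a) ^ q / q = C * a ^ q := by rw [mul_rpow ht.le ha, htq]; field_simp
  have h3 : (p * b / t) ^ p / p = ((p - 1) / C) ^ (p - 1) * b ^ p := by
    rw [mul_div_right_comm, mul_rpow (div_nonneg hp0.le ht.le) hb, div_rpow hp0.le ht.le, htp,
      show (p - 1) / C = p / (C * q) by rw [hq]; field_simp, div_rpow hp0.le hCq.le,
      rpow_sub_one hp0.ne']
    field_simp
  rwa [h1, h2, h3] at young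

section Pointwise

variable {F : Type*} [NormedAddCommGroup F] [InnerProductSpace ℝ F]

lemma abs_rpow_mul_inner_le (g w : F) {c : ℝ} (hc : 0 < c + 1) :
    |‖g‖ ^ c * ⟪g, w⟫| ≤ ‖g‖ ^ (c + 1) * ‖w‖ := by
  rcases eq_or_ne g 0 with rfl | hg
  · simp [zero_rpow hc.ne']
  rw [abs_mul, abs_of_nonneg (rpow_nonneg (norm_nonneg _) _),
    rpow_add_one (norm_ne_zero_iff.2 hg), mul_assoc]
  exact mul_le_mul_of_nonneg_left (abs_real_inner_le_norm g w) (rpow_nonneg (norm_nonneg _) _)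

lemma neg_rpow_mul_inner_smul_le {p₁ p₂ p C c s : ℝ} (g w : F) (hp₁ : 0 < p₁ - 1) (hp : 1 < p)
    (hexp : (p₁ - 1) * (p / (p - 1)) = p₂) (hC : 0 < C) (hs : 0 ≤ s)
    (hc : |c| ≤ p * s ^ ((p - 1) / 2)) :
    -(‖g‖ ^ (p₁ - 2) * ⟪g, c • w⟫) ≤
      C * (s ^ (p / 2) * ‖g‖ ^ p₂) + ((p - 1) / C) ^ (p - 1) * ‖w‖ ^ p := by
  have hflux : |‖g‖ ^ (p₁ - 2) * ⟪g, w⟫| ≤ ‖g‖ ^ (p₁ - 1) * ‖w‖ := by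
    simpa [show p₁ - 2 + 1 = p₁ - 1 by ring] using
      abs_rpow_mul_inner_le g w (c := p₁ - 2) (by linarith)
  set a := ‖g‖ ^ (p₁ - 1) * s ^ ((p - 1) / 2)
  have ha : 0 ≤ a := mul_nonneg (rpow_nonneg (norm_nonneg _) _) (rpow_nonneg hs _)
  have haq : a ^ (p / (p - 1)) = s ^ (p / 2) * ‖g‖ ^ p₂ := by
    rw [mul_rpow (rpow_nonneg (norm_nonneg _) _) (rpow_nonneg hs _), ← rpow_mul (norm_nonneg _),
      ← rpow_mul hs, hexp, mul_comm,
      show (p - 1) / 2 * (p / (p - 1)) = p / 2 by field_simp [(sub_pos.2 hp).ne']]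
  calc -(‖g‖ ^ (p₁ - 2) * ⟪g, c • w⟫)
      ≤ |c| * |‖g‖ ^ (p₁ - 2) * ⟪g, w⟫| := by
        rw [real_inner_smul_right, mul_left_comm, ← abs_mul]; exact neg_le_abs _
    _ ≤ p * s ^ ((p - 1) / 2) * (‖g‖ ^ (p₁ - 1) * ‖w‖) :=
        mul_le_mul hc hflux (abs_nonneg _) (by positivity)
    _ = p * a * ‖w‖ := by ring
    _ ≤ C * (s ^ (p / 2) * ‖g‖ ^ p₂) + ((p - 1) / C) ^ (p - 1) * ‖w‖ ^ p := by
        rw [← haq]; exact young_inequality_weighted hp hC ha (norm_nonneg w)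

end Pointwise

noncomputable def smoothAbsRpow (ε p t : ℝ) : ℝ := (t ^ 2 + ε ^ 2) ^ (p / 2) - ε ^ p

section SmoothAbsRpow

variable {ε p : ℝ}

lemma smoothAbsRpow_zero (hε : 0 ≤ ε) : smoothAbsRpow ε p 0 = 0 := by
  simp [smoothAbsRpow, sq_rpow_div_two hε]

lemma smoothAbsRpow_nonneg (hε : 0 ≤ ε) (hp : 0 ≤ p) (t : ℝ) : 0 ≤ smoothAbsRpow ε p t := by
  rw [smoothAbsRpow, sub_nonneg, ← sq_rpow_div_two hε]
  gcongr
  nlinarith [sq_nonneg t]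

lemma abs_rpow_le_smoothAbsRpow_add (hp : 0 ≤ p) (t : ℝ) :
    |t| ^ p ≤ smoothAbsRpow ε p t + ε ^ p := by
  rw [smoothAbsRpow, sub_add_cancel, ← sq_rpow_div_two (abs_nonneg t), sq_abs]
  gcongr
  nlinarith [sq_nonneg ε]

lemma hasDerivAt_smoothAbsRpow (hε : ε ≠ 0) (t : ℝ) :
    HasDerivAt (smoothAbsRpow ε p) (p * t * (t ^ 2 + ε ^ 2) ^ (p / 2 - 1)) t := by
  have hs : t ^ 2 + ε ^ 2 ≠ 0 := by positivity
  refine ((((hasDerivAt_pow 2 t).add_const (ε ^ 2)).rpow_const (p := p / 2) (Or.inl hs)).sub_const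
    _).congr_deriv ?_
  push_cast
  ring

lemma contDiff_smoothAbsRpow (hε : ε ≠ 0) {n : WithTop ℕ∞} :
    ContDiff ℝ n (smoothAbsRpow ε p) := by
  refine ContDiff.sub (contDiff_iff_contDiffAt.2 fun t => ?_) contDiff_const
  exact (contDiffAt_rpow_const_of_ne (by positivity)).comp t
    ((contDiff_id.pow 2).add contDiff_const).contDiffAt

lemma abs_deriv_smoothAbsRpow_le (hε : ε ≠ 0) (hp : 0 ≤ p) (t : ℝ) :
    |deriv (smoothAbsRpow ε p) t| ≤ p * (t ^ 2 + ε ^ 2) ^ ((p - 1) / 2) := by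
  have hs : 0 < t ^ 2 + ε ^ 2 := by positivity
  have ht : |t| ≤ (t ^ 2 + ε ^ 2) ^ (1 / 2 : ℝ) := by
    conv_lhs => rw [← rpow_one |t|, ← sq_rpow_div_two (abs_nonneg t), sq_abs]
    gcongr
    nlinarith [sq_nonneg ε]
  rw [(hasDerivAt_smoothAbsRpow hε t).deriv, abs_mul, abs_mul, abs_of_nonneg hp,
    abs_of_pos (rpow_pos_of_pos hs _), mul_assoc,
    show (p - 1) / 2 = 1 / 2 + (p / 2 - 1) by ring, rpow_add hs]
  gcongr

end SmoothAbsRpow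

section Gradient

variable {F : Type*} [NormedAddCommGroup F] [InnerProductSpace ℝ F] [CompleteSpace F]

lemma gradient_eq_zero_of_notMem_tsupport {g : F → ℝ} {x : F} (hx : x ∉ tsupport g) :
    gradient g x = 0 := by
  rw [gradient, fderiv_of_notMem_tsupport ℝ hx, map_zero]

lemma ContDiff.continuous_gradient {g : F → ℝ} {n : WithTop ℕ∞} (hg : ContDiff ℝ n g)
    (hn : 1 ≤ n) : Continuous (gradient g) :=
  (InnerProductSpace.toDual ℝ F).symm.continuous.comp (hg.continuous_fderiv (by positivity))

lemma gradient_scomp {h : ℝ → ℝ} {g : F → ℝ} {x : F} (hh : DifferentiableAt ℝ h (g x))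
    (hg : DifferentiableAt ℝ g x) :
    gradient (h ∘ g) x = deriv h (g x) • gradient g x := by
  rw [gradient, (hh.hasDerivAt.comp_hasFDerivAt (h₂ := h) x hg.hasFDerivAt).fderiv, map_smul,
    gradient]

lemma HasCompactSupport.gradient {g : F → ℝ} (hg : HasCompactSupport g) :
    HasCompactSupport (gradient g) :=
  (hg.fderiv ℝ).comp_left (g := (InnerProductSpace.toDual ℝ F).symm) (map_zero _)

lemma neg_flux_smoothAbsRpow_le {f v : F → ℝ} {p₁ p₂ p C ε : ℝ} {x : F}
    (hv : DifferentiableAt ℝ v x) (hp₁ : 0 < p₁ - 1) (hp : 1 < p)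
    (hexp : (p₁ - 1) * (p / (p - 1)) = p₂) (hC : 0 < C) (hε : 0 < ε) :
    -(‖gradient f x‖ ^ (p₁ - 2) * ⟪gradient f x, gradient (smoothAbsRpow ε p ∘ v) x⟫) ≤
      C * ((smoothAbsRpow ε p ∘ v) x * ‖gradient f x‖ ^ p₂) +
        (tsupport v).indicator (fun x => C * ε ^ p * ‖gradient f x‖ ^ p₂) x +
        ((p - 1) / C) ^ (p - 1) * ‖gradient v x‖ ^ p := by
  have hp0 : 0 < p := one_pos.trans hp
  by_cases hx : x ∈ tsupport v
  · have hyoung := neg_rpow_mul_inner_smul_le (gradient f x) (gradient v x) hp₁ hp hexp hC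
      (by positivity) (abs_deriv_smoothAbsRpow_le hε.ne' hp0.le (v x))
    rw [show (v x ^ 2 + ε ^ 2) ^ (p / 2) = smoothAbsRpow ε p (v x) + ε ^ p from
      (sub_add_cancel _ _).symm] at hyoung
    rw [gradient_scomp ((contDiff_smoothAbsRpow hε.ne' (n := 1)).differentiable one_ne_zero _)
      hv, indicator_of_mem hx, Function.comp_apply]
    linarith
  · rw [indicator_of_notMem hx, gradient_eq_zero_of_notMem_tsupport
      (notMem_subset (tsupport_comp_subset (smoothAbsRpow_zero hε.le) v) hx)]
    simp only [inner_zero_right, mul_zero, neg_zero, add_zero]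
    have := smoothAbsRpow_nonneg hε.le hp0.le (v x)
    positivity

end Gradient

section Integral

variable {X : Type*} [TopologicalSpace X] [MeasurableSpace X] [OpensMeasurableSpace X]
  {μ : Measure X} [IsFiniteMeasureOnCompacts μ]

lemma integral_abs_rpow_le_integral_smoothAbsRpow_add {v : X → ℝ} (hv : Continuous v)
    (hvc : HasCompactSupport v) {ε p : ℝ} (hε : 0 < ε) (hp : 0 < p) :
    ∫ x, |v x| ^ p ∂μ ≤ ∫ x, (smoothAbsRpow ε p ∘ v) x ∂μ + μ.real (tsupport v) * ε ^ p := by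
  have hK := (isClosed_tsupport v).measurableSet
  have hvp : Integrable (fun x => |v x| ^ p) μ :=
    (hv.abs.rpow_const fun _ => Or.inr hp.le).integrable_of_hasCompactSupport
      (hvc.comp_left (g := fun t => |t| ^ p) (by simp [zero_rpow hp.ne']))
  have hφ : Integrable (smoothAbsRpow ε p ∘ v) μ :=
    ((contDiff_smoothAbsRpow hε.ne' (n := 0)).continuous.comp hv).integrable_of_hasCompactSupport
      (hvc.comp_left (smoothAbsRpow_zero hε.le))
  have hind : Integrable ((tsupport v).indicator fun _ => ε ^ p) μ :=
    (integrable_indicator_iff hK).2 (integrableOn_const hvc.measure_lt_top.ne)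
  rw [← smul_eq_mul, ← integral_indicator_const _ hK, ← integral_add hφ hind]
  refine integral_mono hvp (hφ.add hind) fun x => ?_
  by_cases hx : x ∈ tsupport v
  · simpa [indicator_of_mem hx] using abs_rpow_le_smoothAbsRpow_add hp.le (v x)
  · simp [indicator_of_notMem hx, image_eq_zero_of_notMem_tsupport hx, zero_rpow hp.ne',
      smoothAbsRpow_zero hε.le]

end Integral

section Flux

variable {E : Type*} [NormedAddCommGroup E] [InnerProductSpace ℝ E] [CompleteSpace E]
  [MeasurableSpace E] [BorelSpace E] {μ : Measure E} [IsFiniteMeasureOnCompacts μ]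

lemma integrable_rpow_mul_inner_gradient {f φ : E → ℝ} {q : ℝ} (hq : 0 < q + 1)
    (hf : ContDiff ℝ 1 f) (hφ : ContDiff ℝ 1 φ) (hφc : HasCompactSupport φ) :
    Integrable (fun x => ‖gradient f x‖ ^ q * ⟪gradient f x, gradient φ x⟫) μ := by
  have hdf := hf.continuous_gradient le_rfl
  have hdφ := hφ.continuous_gradient le_rfl
  have hbound : Integrable (fun x => ‖gradient f x‖ ^ (q + 1) * ‖gradient φ x‖) μ :=
    ((hdf.norm.rpow_const fun _ => Or.inr hq.le).mul hdφ.norm).integrable_of_hasCompactSupport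
      hφc.gradient.norm.mul_left
  refine hbound.mono' ?_ (ae_of_all _ fun x => ?_)
  · exact ((hdf.norm.measurable.pow_const q).mul
      (hdf.inner hdφ).measurable).aestronglyMeasurable
  · exact (Real.norm_eq_abs _).trans_le (abs_rpow_mul_inner_le _ _ hq)

lemma integral_neg_flux_smoothAbsRpow_le {f v : E → ℝ} {p₁ p₂ p C ε : ℝ}
    (hf : ContDiff ℝ 1 f) (hv : ContDiff ℝ 1 v) (hvc : HasCompactSupport v)
    (hp₁ : 0 < p₁ - 1) (hp : 1 < p) (hexp : (p₁ - 1) * (p / (p - 1)) = p₂) (hC : 0 < C)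
    (hε : 0 < ε) :
    -∫ x, ‖gradient f x‖ ^ (p₁ - 2) * ⟪gradient f x, gradient (smoothAbsRpow ε p ∘ v) x⟫ ∂μ ≤
      C * ∫ x, (smoothAbsRpow ε p ∘ v) x * ‖gradient f x‖ ^ p₂ ∂μ +
        C * ε ^ p * ∫ x in tsupport v, ‖gradient f x‖ ^ p₂ ∂μ +
        ((p - 1) / C) ^ (p - 1) * ∫ x, ‖gradient v x‖ ^ p ∂μ := by
  have hp0 : 0 < p := one_pos.trans hp
  have hpt := fun x =>
    neg_flux_smoothAbsRpow_le (f := f) (hv.differentiable one_ne_zero x) hp₁ hp hexp hC hε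
  set φ := smoothAbsRpow ε p ∘ v
  set K := tsupport v
  set kk := ((p - 1) / C) ^ (p - 1)
  have hφ : ContDiff ℝ 1 φ := (contDiff_smoothAbsRpow hε.ne').comp hv
  have hφc : HasCompactSupport φ := hvc.comp_left (smoothAbsRpow_zero hε.le)
  have hp₂ : 0 < p₂ := hexp ▸ mul_pos hp₁ (div_pos hp0 (sub_pos.2 hp))
  have hgf : Continuous fun x => ‖gradient f x‖ ^ p₂ :=
    (hf.continuous_gradient le_rfl).norm.rpow_const fun _ => Or.inr hp₂.le
  have i1 : Integrable (fun x => φ x * ‖gradient f x‖ ^ p₂) μ :=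
    (hφ.continuous.mul hgf).integrable_of_hasCompactSupport hφc.mul_right
  have i2 :
      Integrable (fun x => K.indicator (fun x => C * ε ^ p * ‖gradient f x‖ ^ p₂) x) μ :=
    ((hgf.const_mul _).continuousOn.integrableOn_compact hvc).integrable_indicator
      (isClosed_tsupport v).measurableSet
  have i3 : Integrable (fun x => ‖gradient v x‖ ^ p) μ :=
    ((hv.continuous_gradient le_rfl).norm.rpow_const fun _ => Or.inr hp0.le)
      |>.integrable_of_hasCompactSupport
        (hvc.gradient.comp_left (g := fun w => ‖w‖ ^ p) (by simp [zero_rpow hp0.ne']))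
  have i12 : Integrable (fun x => C * (φ x * ‖gradient f x‖ ^ p₂) +
      K.indicator (fun x => C * ε ^ p * ‖gradient f x‖ ^ p₂) x) μ := (i1.const_mul C).add i2
  calc -∫ x, ‖gradient f x‖ ^ (p₁ - 2) * ⟪gradient f x, gradient φ x⟫ ∂μ
      ≤ ∫ x, (C * (φ x * ‖gradient f x‖ ^ p₂) +
          K.indicator (fun x => C * ε ^ p * ‖gradient f x‖ ^ p₂) x +
            kk * ‖gradient v x‖ ^ p) ∂μ := by
        rw [← integral_neg]
        exact integral_mono (integrable_rpow_mul_inner_gradient (by linarith) hf hφ hφc).neg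
          (i12.add (i3.const_mul kk)) hpt
    _ = _ := by
        rw [integral_add i12 (i3.const_mul kk), integral_add (i1.const_mul C) i2,
          integral_indicator (isClosed_tsupport v).measurableSet, integral_const_mul,
          integral_const_mul, integral_const_mul]

lemma integral_abs_rpow_le_of_weak_ineq {f v : E → ℝ} {p₁ p₂ p C D ε : ℝ}
    (hf : ContDiff ℝ 1 f) (hv : ContDiff ℝ 1 v) (hvc : HasCompactSupport v)
    (hp₁ : 0 < p₁ - 1) (hp : 1 < p) (hexp : (p₁ - 1) * (p / (p - 1)) = p₂) (hC : 0 < C)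
    (hD : 0 ≤ D) (hε : 0 < ε)
    (hweak : D * ∫ x, (smoothAbsRpow ε p ∘ v) x ∂μ ≤
      (-∫ x, ‖gradient f x‖ ^ (p₁ - 2) * ⟪gradient f x, gradient (smoothAbsRpow ε p ∘ v) x⟫ ∂μ) -
        C * ∫ x, (smoothAbsRpow ε p ∘ v) x * ‖gradient f x‖ ^ p₂ ∂μ) :
    (C / (p - 1)) ^ (p - 1) * D * ∫ x, |v x| ^ p ∂μ ≤ ∫ x, ‖gradient v x‖ ^ p ∂μ +
      ε ^ p * ((C / (p - 1)) ^ (p - 1) *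
        (C * ∫ x in tsupport v, ‖gradient f x‖ ^ p₂ ∂μ + D * μ.real (tsupport v))) := by
  have hpm1 : 0 < p - 1 := sub_pos.2 hp
  have hk : (C / (p - 1)) ^ (p - 1) * ((p - 1) / C) ^ (p - 1) = 1 := by
    rw [← inv_div, inv_rpow (div_pos hpm1 hC).le,
      inv_mul_cancel₀ (rpow_pos_of_pos (div_pos hpm1 hC) _).ne']
  have hflux := integral_neg_flux_smoothAbsRpow_le (μ := μ) hf hv hvc hp₁ hp hexp hC hε
  have hvp := integral_abs_rpow_le_integral_smoothAbsRpow_add (μ := μ) hv.continuous hvc hε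
    (one_pos.trans hp)
  have hbound :
      D * ∫ x, |v x| ^ p ∂μ ≤ ((p - 1) / C) ^ (p - 1) * ∫ x, ‖gradient v x‖ ^ p ∂μ +
        ε ^ p * (C * ∫ x in tsupport v, ‖gradient f x‖ ^ p₂ ∂μ + D * μ.real (tsupport v)) := by
    linear_combination hweak + hflux + mul_le_mul_of_nonneg_left hvp hD
  calc (C / (p - 1)) ^ (p - 1) * D * ∫ x, |v x| ^ p ∂μ
      = (C / (p - 1)) ^ (p - 1) * (D * ∫ x, |v x| ^ p ∂μ) := by ring
    _ ≤ (C / (p - 1)) ^ (p - 1) * (((p - 1) / C) ^ (p - 1) * ∫ x, ‖gradient v x‖ ^ p ∂μ +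
        ε ^ p * (C * ∫ x in tsupport v, ‖gradient f x‖ ^ p₂ ∂μ + D * μ.real (tsupport v))) := by
      gcongr
    _ = _ := by linear_combination (∫ x, ‖gradient v x‖ ^ p ∂μ) * hk

end Flux

theorem eigenvalue_lower_bound_via_function_general {n : ℕ}
    (Ω : Set (EuclideanSpace ℝ (Fin n)))
    (p₁ p₂ p : ℝ) (hp₁ : 0 < p₁ - 1) (hp₂ : p₁ - 1 < p₂)
    (hp : p = p₂ / (p₂ - p₁ + 1))
    (f : EuclideanSpace ℝ (Fin n) → ℝ) (hf : ContDiff ℝ 1 f)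
    (C D : ℝ) (hC : 0 < C) (hD : 0 < D)
    (hdiv : ∀ φ : EuclideanSpace ℝ (Fin n) → ℝ, ContDiff ℝ (⊤ : ℕ∞) φ →
      HasCompactSupport φ → tsupport φ ⊆ Ω → (∀ x, 0 ≤ φ x) →
      D * ∫ x in Ω, φ x ≤
        (-∫ x in Ω, ‖gradient f x‖ ^ (p₁ - 2) * ⟪gradient f x, gradient φ x⟫) -
          C * ∫ x in Ω, φ x * ‖gradient f x‖ ^ p₂) :
    ∀ v : EuclideanSpace ℝ (Fin n) → ℝ, ContDiff ℝ (⊤ : ℕ∞) v →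
      HasCompactSupport v → tsupport v ⊆ Ω →
      (C / (p - 1)) ^ (p - 1) * D * ∫ x in Ω, |v x| ^ p ≤
        ∫ x in Ω, ‖gradient v x‖ ^ p := by
  intro v hv hvc hvΩ
  have hQ : 0 < p₂ - p₁ + 1 := by linarith
  have hpm1 : p - 1 = (p₁ - 1) / (p₂ - p₁ + 1) := by rw [hp]; field_simp; ring
  have hp1 : 1 < p := by linarith [div_pos hp₁ hQ]
  have hexp : (p₁ - 1) * (p / (p - 1)) = p₂ := by
    rw [hpm1, hp, div_div_div_cancel_right₀ hQ.ne', mul_div_cancel₀ _ hp₁.ne']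
  have hv1 : ContDiff ℝ 1 v := hv.of_le (by exact_mod_cast le_top)
  exact le_of_forall_pos_le_add_rpow_mul (one_pos.trans hp1) fun ε hε =>
    integral_abs_rpow_le_of_weak_ineq hf hv1 hvc hp₁ hp1 hexp hC hD.le hε <|
      hdiv _ ((contDiff_smoothAbsRpow hε.ne').comp hv)
        (hvc.comp_left (smoothAbsRpow_zero hε.le))
        ((tsupport_comp_subset (smoothAbsRpow_zero hε.le) v).trans hvΩ)
        fun x => smoothAbsRpow_nonneg hε.le (one_pos.trans hp1).le (v x)

/-- Theorem 1.1: lower bound for the first Dirichlet `p`-eigenvalue from a function `f`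
satisfying `Δ_{p₁} f - C|∇f|^{p₂} ≥ D` in the weak (distributional) sense. -/
theorem eigenvalue_lower_bound_via_function {n : ℕ}
    (Ω : Set (EuclideanSpace ℝ (Fin n))) (hne : Ω.Nonempty) (hΩ : IsOpen Ω)
    (p₁ p₂ p : ℝ) (hp₁ : 0 < p₁ - 1) (hp₂ : p₁ - 1 < p₂)
    (hp : p = p₂ / (p₂ - p₁ + 1))
    (f : EuclideanSpace ℝ (Fin n) → ℝ) (hf : ContDiff ℝ 1 f)
    (C D : ℝ) (hC : 0 < C) (hD : 0 < D)
    (hdiv : ∀ φ : EuclideanSpace ℝ (Fin n) → ℝ, ContDiff ℝ (⊤ : ℕ∞) φ →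
      HasCompactSupport φ → tsupport φ ⊆ Ω → (∀ x, 0 ≤ φ x) →
      D * ∫ x in Ω, φ x ≤
        (-∫ x in Ω, ‖gradient f x‖ ^ (p₁ - 2) * ⟪gradient f x, gradient φ x⟫) -
          C * ∫ x in Ω, φ x * ‖gradient f x‖ ^ p₂) :
    ∀ v : EuclideanSpace ℝ (Fin n) → ℝ, ContDiff ℝ (⊤ : ℕ∞) v →
      HasCompactSupport v → tsupport v ⊆ Ω →
      (C / (p - 1)) ^ (p - 1) * D * ∫ x in Ω, |v x| ^ p ≤
        ∫ x in Ω, ‖gradient v x‖ ^ p :=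
  eigenvalue_lower_bound_via_function_general Ω p₁ p₂ p hp₁ hp₂ hp f hf C D hC hD hdiv
end

section
/- Let n be a positive integer and p > 1 a real number. Then there exists a constant C = C(n,p) > 0 such that for all R ≥ 1, ∫₀^π (1 - e^{-2Rθ/π})^n (sin θ)^p dθ ≥ ∫₀^π (sin θ)^p dθ - C / R^{1+p}. -/
open Real

/-- Estimate (4.13): the denominator `G(R) = ∫₀^π (1-e^{-2Rθ/π})ⁿ sinᵖθ dθ` satisfies
`G(R) ≥ ∫₀^π sinᵖθ dθ - C/R^{1+p}` for all `R ≥ 1`. -/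
theorem denominator_lower_bound (n : ℕ) (hn : 0 < n) (p : ℝ) (hp : 1 < p) :
    ∃ C : ℝ, 0 < C ∧ ∀ R : ℝ, 1 ≤ R →
      (∫ θ in (0 : ℝ)..π, Real.sin θ ^ p) - C / R ^ (1 + p) ≤
        ∫ θ in (0 : ℝ)..π, (1 - Real.exp (-2 * R * θ / π)) ^ n * Real.sin θ ^ p := by
  obtain ⟨m, hm⟩ : ∃ m : ℕ, p + 1 < m := exists_nat_gt (p + 1)
  have hp0 : (0 : ℝ) < p := by linarith
  have hπ : (0 : ℝ) < π := Real.pi_pos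
  have hmp : (0 : ℝ) < (m : ℝ) - p - 1 := by linarith
  have hn' : (0 : ℝ) < (n : ℝ) := by exact_mod_cast hn
  set C : ℝ := n / (p + 1) + n * m.factorial * (π / 2) ^ m / ((m : ℝ) - p - 1) with hC
  have hCpos : 0 < C := by
    have h1 : (0:ℝ) < (n : ℝ) / (p + 1) := div_pos hn' (by linarith)
    have h2 : (0:ℝ) < (n : ℝ) * m.factorial * (π / 2) ^ m / ((m : ℝ) - p - 1) := by
      apply div_pos _ hmp
      have : (0:ℝ) < (m.factorial : ℝ) := by exact_mod_cast m.factorial_pos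
      positivity
    rw [hC]; linarith
  refine ⟨C, hCpos, fun R hR => ?_⟩
  have hR0 : (0 : ℝ) < R := by linarith
  have hRinv : (0 : ℝ) < 1 / R := by positivity
  have hRle : 1 / R ≤ π := by
    have : 1 / R ≤ 1 := by rw [div_le_one hR0]; exact hR
    linarith [Real.pi_gt_three]
  -- exp bound helper
  have hE1 : ∀ θ : ℝ, 0 ≤ θ → Real.exp (-2 * R * θ / π) ≤ 1 := by
    intro θ hθ
    have h1 : (0:ℝ) ≤ 2 * R * θ / π := div_nonneg (mul_nonneg (by linarith) hθ) hπ.le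
    rw [show (-2 * R * θ / π : ℝ) = -(2 * R * θ / π) by ring]
    exact Real.exp_le_one_iff.mpr (neg_nonpos.mpr h1)
  set g : ℝ → ℝ := fun θ => (n : ℝ) * Real.exp (-2 * R * θ / π) * θ ^ p with hg
  -- continuity
  have contE : Continuous fun θ : ℝ => Real.exp (-2 * R * θ / π) := by
    apply Real.continuous_exp.comp; continuity
  have cont_sinp : Continuous fun θ : ℝ => Real.sin θ ^ p :=
    Real.continuous_sin.rpow_const fun x => Or.inr hp0.le
  have cont_main : Continuous fun θ : ℝ => (1 - Real.exp (-2 * R * θ / π)) ^ n * Real.sin θ ^ p :=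
    ((continuous_const.sub contE).pow n).mul cont_sinp
  have cont_idp : Continuous fun θ : ℝ => θ ^ p :=
    continuous_id.rpow_const fun x => Or.inr hp0.le
  have cont_g : Continuous g := (continuous_const.mul contE).mul cont_idp
  have int_sinp : IntervalIntegrable (fun θ => Real.sin θ ^ p) MeasureTheory.volume 0 π :=
    cont_sinp.intervalIntegrable 0 π
  have int_main : IntervalIntegrable
      (fun θ => (1 - Real.exp (-2 * R * θ / π)) ^ n * Real.sin θ ^ p)
      MeasureTheory.volume 0 π := cont_main.intervalIntegrable 0 π
  -- step 1 : difference of integrals ≤ ∫ g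
  have step1 : (∫ θ in (0:ℝ)..π, Real.sin θ ^ p) -
      (∫ θ in (0:ℝ)..π, (1 - Real.exp (-2 * R * θ / π)) ^ n * Real.sin θ ^ p) ≤
      ∫ θ in (0:ℝ)..π, g θ := by
    rw [← intervalIntegral.integral_sub int_sinp int_main]
    apply intervalIntegral.integral_mono_on hπ.le
      (int_sinp.sub int_main) (cont_g.intervalIntegrable 0 π)
    intro θ hθ
    obtain ⟨hθ0, hθπ⟩ := hθ
    set x := Real.exp (-2 * R * θ / π) with hx
    have hx0 : 0 < x := Real.exp_pos _
    have hx1 : x ≤ 1 := hE1 θ hθ0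
    have hbern : 1 - (n : ℝ) * x ≤ (1 - x) ^ n := by
      have := one_add_mul_le_pow (a := -x) (by linarith) n
      rw [← sub_eq_add_neg] at this
      linarith [this]
    have hsin0 : 0 ≤ Real.sin θ := Real.sin_nonneg_of_nonneg_of_le_pi hθ0 hθπ
    have hsinp_nonneg : 0 ≤ Real.sin θ ^ p := Real.rpow_nonneg hsin0 p
    have hsinp_le : Real.sin θ ^ p ≤ θ ^ p :=
      Real.rpow_le_rpow hsin0 (Real.sin_le hθ0) hp0.le
    have h1 : (1 - (1 - x) ^ n) * Real.sin θ ^ p ≤ ((n : ℝ) * x) * Real.sin θ ^ p :=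
      mul_le_mul_of_nonneg_right (by linarith) hsinp_nonneg
    have h2 : ((n : ℝ) * x) * Real.sin θ ^ p ≤ ((n : ℝ) * x) * θ ^ p :=
      mul_le_mul_of_nonneg_left hsinp_le (by positivity)
    have h3 : (1 - (1 - x) ^ n) * Real.sin θ ^ p ≤ ((n : ℝ) * x) * θ ^ p := le_trans h1 h2
    simp only [hg]
    nlinarith [h3]
  -- split ∫ g
  have int_g1 : IntervalIntegrable g MeasureTheory.volume 0 (1/R) :=
    cont_g.intervalIntegrable _ _
  have int_g2 : IntervalIntegrable g MeasureTheory.volume (1/R) π :=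
    cont_g.intervalIntegrable _ _
  have hsplit : (∫ θ in (0:ℝ)..π, g θ) =
      (∫ θ in (0:ℝ)..(1/R), g θ) + ∫ θ in (1/R)..π, g θ :=
    (intervalIntegral.integral_add_adjacent_intervals int_g1 int_g2).symm
  -- piece 1
  have piece1 : (∫ θ in (0:ℝ)..(1/R), g θ) ≤ (n : ℝ) / (p + 1) * (R ^ (1 + p))⁻¹ := by
    have hb : (∫ θ in (0:ℝ)..(1/R), g θ) ≤ ∫ θ in (0:ℝ)..(1/R), (n : ℝ) * θ ^ p := by
      apply intervalIntegral.integral_mono_on hRinv.le (cont_g.intervalIntegrable _ _)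
        ((continuous_const.mul cont_idp).intervalIntegrable _ _)
      intro θ hθ
      obtain ⟨hθ0, _⟩ := hθ
      simp only [hg]
      have hθp : 0 ≤ θ ^ p := Real.rpow_nonneg hθ0 p
      calc (n : ℝ) * Real.exp (-2 * R * θ / π) * θ ^ p
          ≤ ((n : ℝ) * 1) * θ ^ p := by
            apply mul_le_mul_of_nonneg_right _ hθp
            exact mul_le_mul_of_nonneg_left (hE1 θ hθ0) hn'.le
        _ = (n : ℝ) * θ ^ p := by ring
    calc (∫ θ in (0:ℝ)..(1/R), g θ) ≤ ∫ θ in (0:ℝ)..(1/R), (n : ℝ) * θ ^ p := hb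
      _ = (n : ℝ) * (((1/R) ^ (p+1) - (0:ℝ) ^ (p+1)) / (p + 1)) := by
          rw [intervalIntegral.integral_const_mul, integral_rpow (Or.inl (by linarith))]
      _ = (n : ℝ) / (p + 1) * (R ^ (1 + p))⁻¹ := by
          rw [Real.zero_rpow (by linarith), one_div, Real.inv_rpow hR0.le,
            show p + 1 = 1 + p by ring]
          ring
  -- piece 2
  have hq : p - m < -1 := by linarith
  have hnotmem : (0:ℝ) ∉ Set.uIcc (1/R) π := by
    rw [Set.mem_uIcc]
    push_neg
    constructor <;> intro h <;> linarith
  have piece2 : (∫ θ in (1/R)..π, g θ) ≤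
      (n : ℝ) * m.factorial * (π / 2) ^ m / ((m : ℝ) - p - 1) * (R ^ (1 + p))⁻¹ := by
    have intg2 : IntervalIntegrable (fun θ : ℝ => θ ^ (p - m)) MeasureTheory.volume (1/R) π :=
      intervalIntegral.intervalIntegrable_rpow (Or.inr hnotmem)
    have hb : (∫ θ in (1/R)..π, g θ) ≤
        ∫ θ in (1/R)..π, ((n : ℝ) * m.factorial * (π / (2*R)) ^ m) * θ ^ (p - m) := by
      apply intervalIntegral.integral_mono_on hRle (cont_g.intervalIntegrable _ _)
        (intg2.const_mul _)
      intro θ hθ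
      obtain ⟨hθ0, hθπ⟩ := hθ
      have hθpos : 0 < θ := lt_of_lt_of_le hRinv hθ0
      set c : ℝ := 2 * R / π with hc
      have hcpos : 0 < c := by positivity
      have harg : -2 * R * θ / π = -(c * θ) := by rw [hc]; ring
      have hkey : Real.exp (-(c * θ)) * (c * θ) ^ m ≤ (m.factorial : ℝ) := by
        have h1 : (c * θ) ^ m / (m.factorial : ℝ) ≤
            ∑ i ∈ Finset.range (m + 1), (c * θ) ^ i / (i.factorial : ℝ) := by
          refine Finset.single_le_sum (f := fun i => (c * θ) ^ i / (i.factorial : ℝ))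
            (fun i _ => by positivity) (Finset.self_mem_range_succ m)
        have hsum : (c * θ) ^ m / (m.factorial : ℝ) ≤ Real.exp (c * θ) :=
          le_trans h1 (Real.sum_le_exp_of_nonneg (by positivity) _)
        rw [Real.exp_neg, inv_mul_le_iff₀ (Real.exp_pos _)]
        rw [div_le_iff₀ (by positivity)] at hsum
        linarith [hsum]
      simp only [hg, harg]
      have hsplitp : θ ^ p = θ ^ (m : ℕ) * θ ^ (p - m) := by
        rw [← Real.rpow_natCast θ m, ← Real.rpow_add hθpos]
        ring_nf
      rw [hsplitp]
      have hcm : (c * θ) ^ m = c ^ m * θ ^ m := mul_pow c θ m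
      have hpm : (0:ℝ) ≤ θ ^ (p - m) := Real.rpow_nonneg hθpos.le _
      have hfinal : Real.exp (-(c * θ)) * θ ^ (m:ℕ) ≤ (m.factorial : ℝ) / c ^ m := by
        rw [le_div_iff₀ (by positivity)]
        calc Real.exp (-(c * θ)) * θ ^ m * c ^ m
            = Real.exp (-(c * θ)) * (c * θ) ^ m := by rw [hcm]; ring
          _ ≤ (m.factorial : ℝ) := hkey
      have hπc : π / (2 * R) = c⁻¹ := by rw [hc]; field_simp
      rw [hπc, inv_pow]
      calc (n:ℝ) * Real.exp (-(c * θ)) * (θ ^ (m:ℕ) * θ ^ (p - m))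
          = (n:ℝ) * (Real.exp (-(c * θ)) * θ ^ (m:ℕ)) * θ ^ (p - m) := by ring
        _ ≤ (n:ℝ) * ((m.factorial : ℝ) / c ^ m) * θ ^ (p - m) := by
            apply mul_le_mul_of_nonneg_right _ hpm
            exact mul_le_mul_of_nonneg_left hfinal hn'.le
        _ = (n:ℝ) * (m.factorial:ℝ) * (c ^ m)⁻¹ * θ ^ (p - m) := by ring
    have hcalc : (∫ θ in (1/R)..π, ((n : ℝ) * m.factorial * (π / (2*R)) ^ m) * θ ^ (p - m))
        = ((n : ℝ) * m.factorial * (π / (2*R)) ^ m) *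
          ((π ^ (p - m + 1) - (1/R) ^ (p - m + 1)) / (p - m + 1)) := by
      rw [intervalIntegral.integral_const_mul,
        integral_rpow (Or.inr ⟨by linarith, hnotmem⟩)]
    have hπq : 0 < π ^ (p - m + 1) := Real.rpow_pos_of_pos hπ _
    have hqne : p - (m:ℝ) + 1 ≠ 0 := by linarith
    have hkey2 : (π ^ (p - (m:ℝ) + 1) - (1/R) ^ (p - (m:ℝ) + 1)) / (p - (m:ℝ) + 1)
        = ((1/R) ^ (p - (m:ℝ) + 1) - π ^ (p - (m:ℝ) + 1)) / ((m:ℝ) - p - 1) := by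
      rw [div_eq_div_iff hqne (by linarith)]
      ring
    have hfact : (0:ℝ) < (m.factorial : ℝ) := by exact_mod_cast m.factorial_pos
    have hconst : (0:ℝ) ≤ (n : ℝ) * m.factorial * (π / (2*R)) ^ m := by positivity
    have hRpow : R ^ (m : ℕ) * R ^ (p - (m:ℝ) + 1) = R ^ (1 + p) := by
      rw [← Real.rpow_natCast R m, ← Real.rpow_add hR0]
      congr 1
      ring
    calc (∫ θ in (1/R)..π, g θ)
        ≤ ∫ θ in (1/R)..π, ((n : ℝ) * m.factorial * (π / (2*R)) ^ m) * θ ^ (p - m) := hb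
      _ = ((n : ℝ) * m.factorial * (π / (2*R)) ^ m) *
          ((π ^ (p - m + 1) - (1/R) ^ (p - m + 1)) / (p - m + 1)) := hcalc
      _ = ((n : ℝ) * m.factorial * (π / (2*R)) ^ m) *
          (((1/R) ^ (p - (m:ℝ) + 1) - π ^ (p - (m:ℝ) + 1)) / ((m:ℝ) - p - 1)) := by
          rw [hkey2]
      _ ≤ ((n : ℝ) * m.factorial * (π / (2*R)) ^ m) *
          ((1/R) ^ (p - (m:ℝ) + 1) / ((m:ℝ) - p - 1)) := by
          apply mul_le_mul_of_nonneg_left _ hconst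
          have : (1/R) ^ (p - (m:ℝ) + 1) - π ^ (p - (m:ℝ) + 1) ≤ (1/R) ^ (p - (m:ℝ) + 1) := by
            linarith
          exact div_le_div_of_nonneg_right this hmp.le

      _ = (n : ℝ) * m.factorial * (π / 2) ^ m / ((m : ℝ) - p - 1) * (R ^ (1 + p))⁻¹ := by
          rw [show π / (2 * R) = (π/2) / R by ring, div_pow, one_div R,
            Real.inv_rpow hR0.le]
          rw [show ((n : ℝ) * m.factorial * ((π/2)^m / R ^ m)) *
              ((R ^ (p - (m:ℝ) + 1))⁻¹ / ((m:ℝ) - p - 1))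
              = (n : ℝ) * m.factorial * (π/2)^m / ((m:ℝ) - p - 1) *
                (R ^ (m:ℕ) * R ^ (p - (m:ℝ) + 1))⁻¹ by
            rw [mul_inv]; ring]
          rw [hRpow]
  -- conclude
  have hfin : (∫ θ in (0:ℝ)..π, g θ) ≤ C / R ^ (1 + p) := by
    have hCsplit : C / R ^ (1 + p) = (n : ℝ) / (p + 1) * (R ^ (1 + p))⁻¹ +
        (n : ℝ) * m.factorial * (π / 2) ^ m / ((m : ℝ) - p - 1) * (R ^ (1 + p))⁻¹ := by
      rw [hC]; ring
    rw [hsplit, hCsplit]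
    exact add_le_add piece1 piece2
  linarith [step1, hfin]
end

section
/- Let n be a positive integer, p > 1 a real number, and R > 0. Then ∫_{-R}^{R} | (n/p)·cos(πt/(2R)) + (π/(2R))·sin(πt/(2R)) |^p dt = ( n²/p² + π²/(4R²) )^{p/2} · ∫_{-R}^{R} ( cos(πt/(2R)) )^p dt. -/
open Real

/-! With `a = n/p` and `b = π/(2R)`, harmonic addition writes `a cos θ + b sin θ` as
`√(a² + b²) cos (θ - φ)`. Since `b R = π/2`, the substitution `θ = b t` turns `[-R, R]` into an
interval of length `π`, a period of `|cos|^p`, so the phase shift `φ` does not change the integral;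
and on `[-R, R]` the cosine is nonnegative, so the absolute value can be dropped. -/

theorem mul_cos_add_mul_sin_eq (a b θ : ℝ) :
    a * cos θ + b * sin θ = √(a ^ 2 + b ^ 2) * cos (θ - Complex.arg (a + b * Complex.I)) := by
  have hcos := Complex.norm_mul_cos_arg (a + b * Complex.I)
  have hsin := Complex.norm_mul_sin_arg (a + b * Complex.I)
  simp only [Complex.norm_add_mul_I, Complex.add_re, Complex.add_im, Complex.ofReal_re,
    Complex.ofReal_im, Complex.re_ofReal_mul, Complex.im_ofReal_mul, Complex.I_re, Complex.I_im,
    mul_zero, mul_one, add_zero, zero_add] at hcos hsin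
  rw [cos_sub]
  linear_combination -cos θ * hcos - sin θ * hsin

theorem periodic_abs_cos_rpow (p : ℝ) : Function.Periodic (fun θ => |cos θ| ^ p) π := by
  intro θ
  simp only [cos_add_pi, abs_neg]

theorem Function.Periodic.intervalIntegral_comp_mul_sub {E : Type*} [NormedAddCommGroup E]
    [NormedSpace ℝ E] {g : ℝ → E} {T b x y : ℝ} (hg : Function.Periodic g T) (hb : b ≠ 0)
    (hT : b * y = b * x + T) (φ : ℝ) :
    ∫ t in x..y, g (b * t - φ) = ∫ t in x..y, g (b * t) := by
  rw [intervalIntegral.integral_comp_mul_sub g hb, intervalIntegral.integral_comp_mul_left g hb,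
    show b * y - φ = (b * x - φ) + T by rw [hT]; ring, hT, hg.intervalIntegral_add_eq]

theorem cos_pi_mul_div_two_mul_nonneg_of_mem_uIcc {R t : ℝ} (ht : t ∈ Set.uIcc (-R) R) :
    0 ≤ cos (π * t / (2 * R)) := by
  have htR : |t| ≤ |R| := by
    rw [Set.mem_uIcc] at ht
    rcases ht with ht | ht <;> cases abs_cases R <;> rw [abs_le] <;> constructor <;> linarith
  suffices h : |π * t / (2 * R)| ≤ π / 2 from
    cos_nonneg_of_neg_pi_div_two_le_of_le (abs_le.mp h).1 (abs_le.mp h).2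
  rw [abs_div, abs_mul, abs_mul, abs_of_pos pi_pos, abs_two]
  rcases eq_or_ne R 0 with rfl | hR
  · simp only [abs_zero, mul_zero, div_zero]
    positivity
  · rw [div_le_iff₀ (by positivity)]
    nlinarith [pi_pos]

theorem cylinder_rayleigh_identity_general (n : ℕ) (p R : ℝ) (hR : 0 < R) :
    ∫ t in (-R)..R, |((n : ℝ) / p) * Real.cos (π * t / (2 * R)) +
        (π / (2 * R)) * Real.sin (π * t / (2 * R))| ^ p =
      ((n : ℝ) ^ 2 / p ^ 2 + π ^ 2 / (4 * R ^ 2)) ^ (p / 2) *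
        ∫ t in (-R)..R, Real.cos (π * t / (2 * R)) ^ p := by
  set b := π / (2 * R)
  set φ := Complex.arg ((n / p : ℝ) + b * Complex.I)
  have hb : b ≠ 0 := by positivity
  have hbR : b * R = b * -R + π := by simp only [b]; field_simp; ring
  have harg (t : ℝ) : π * t / (2 * R) = b * t := by ring
  have hsum : (n : ℝ) ^ 2 / p ^ 2 + π ^ 2 / (4 * R ^ 2) = (n / p) ^ 2 + b ^ 2 := by ring
  calc _ = ∫ t in (-R)..R, ((n : ℝ) ^ 2 / p ^ 2 + π ^ 2 / (4 * R ^ 2)) ^ (p / 2) *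
          |cos (b * t - φ)| ^ p := by
        refine intervalIntegral.integral_congr fun t _ => ?_
        rw [harg, mul_cos_add_mul_sin_eq, abs_mul, abs_of_nonneg (sqrt_nonneg _),
          mul_rpow (sqrt_nonneg _) (abs_nonneg _), hsum, rpow_div_two_eq_sqrt p (by positivity)]
    _ = _ := by
      rw [intervalIntegral.integral_const_mul,
        (periodic_abs_cos_rpow p).intervalIntegral_comp_mul_sub hb hbR]
      refine congrArg _ (intervalIntegral.integral_congr fun t ht => ?_)
      simp only [← harg, abs_of_nonneg (cos_pi_mul_div_two_mul_nonneg_of_mem_uIcc ht)]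

/-- The exact Rayleigh-quotient identity (5.2) for the test function
`f(t) = e^{-nt/p} cos(πt/(2R))` on the cylinder `(ℝ × N, dt² + e^{2t} g_N)`. -/
theorem cylinder_rayleigh_identity (n : ℕ) (hn : 0 < n) (p R : ℝ) (hp : 1 < p)
    (hR : 0 < R) :
    ∫ t in (-R)..R, |((n : ℝ) / p) * Real.cos (π * t / (2 * R)) +
        (π / (2 * R)) * Real.sin (π * t / (2 * R))| ^ p =
      ((n : ℝ) ^ 2 / p ^ 2 + π ^ 2 / (4 * R ^ 2)) ^ (p / 2) *
        ∫ t in (-R)..R, Real.cos (π * t / (2 * R)) ^ p :=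
  cylinder_rayleigh_identity_general n p R hR
end
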